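/- arXiv:1511.01961 — 3 statements merged into one kernel-verified Lean document; each statement's English description precedes it below -/
import Mathlib

section
/- Let 1 ≤ k ≤ m with k = m or k odd, and let a ∈ B^{n-k,k} be a cup diagram. Then S_a (with the subspace topology from (S²)^m) is homeomorphic to (S²)^{⌊k/2⌋}, the ⌊k/2⌋-fold product of the two-sphere; explicitly, the map sending (x_1,…,x_m) ∈ S_a to the tuple of coordinates x_i indexed by the left endpoints i of the cups of a is a homeomorphism onto (S²)^{⌊k/2⌋}. -/
noncomputable section
namespace Spr

/-! ### Linear algebra setup -/

abbrev Vsp (N : ℕ) := EuclideanSpace ℂ (Fin (2*N))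
abbrev C2 := EuclideanSpace ℂ (Fin 2)

/-- The basis vector `e_i` (1-based index). -/
def eVec (N i : ℕ) : Vsp N :=
  if h : 1 ≤ i ∧ i ≤ N then EuclideanSpace.single (⟨i-1, by omega⟩ : Fin (2*N)) 1 else 0

/-- The basis vector `f_i` (1-based index). -/
def fVec (N i : ℕ) : Vsp N :=
  if h : 1 ≤ i ∧ i ≤ N then EuclideanSpace.single (⟨N+i-1, by omega⟩ : Fin (2*N)) 1 else 0

/-- The standard basis vector `e` of `ℂ²`. -/
def eStd : C2 := EuclideanSpace.single 0 1
/-- The standard basis vector `f` of `ℂ²`. -/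
def fStd : C2 := EuclideanSpace.single 1 1

/-- The nilpotent endomorphism `z` with two equal Jordan blocks:
`z e_1 = 0 = z f_1`, `z e_{i+1} = e_i`, `z f_{i+1} = f_i`. -/
def zMap (N : ℕ) : Vsp N →ₗ[ℂ] Vsp N where
  toFun v := WithLp.toLp 2 (fun j => if h : j.val + 1 < 2*N ∧ j.val + 1 ≠ N then v ⟨j.val+1, h.1⟩ else 0)
  map_add' v w := by
    ext j
    by_cases h : j.val + 1 < 2*N ∧ j.val + 1 ≠ N <;> simp [h, PiLp.add_apply]
  map_smul' c v := by
    ext j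
    by_cases h : j.val + 1 < 2*N ∧ j.val + 1 ≠ N <;> simp [h, PiLp.smul_apply]

def cIdx (N : ℕ) (j : Fin 2) (i : Fin N) : Fin (2*N) :=
  ⟨if j.val = 0 then i.val else N + i.val, by have := i.isLt; split <;> omega⟩

/-- The linear map `C : ℂ^{2N} → ℂ²`, `e_i ↦ e`, `f_i ↦ f`. -/
def Cmap (N : ℕ) : Vsp N →ₗ[ℂ] C2 where
  toFun v := WithLp.toLp 2 (fun j => ∑ i : Fin N, v (cIdx N j i))
  map_add' v w := by
    ext j
    simp [PiLp.add_apply, Finset.sum_add_distrib]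
  map_smul' c v := by
    ext j
    simp [PiLp.smul_apply, Finset.mul_sum]

/-- The subspace `E_{a,b} = span(e_1,…,e_a,f_1,…,f_b)`. -/
def Esub (N a b : ℕ) : Submodule ℂ (Vsp N) :=
  Submodule.span ℂ ((eVec N '' Set.Icc 1 a) ∪ (fVec N '' Set.Icc 1 b))

/-- Gram coefficients of the symmetric bilinear form `β_D^{2m-k,k}`. -/
def cD (N m k : ℕ) (p q : Fin (2*N)) : ℂ :=
  if k = m then
    (if p.val < N ∧ N ≤ q.val then
      (if (p.val + 1) + (q.val - N + 1) = k + 1 then (-1:ℂ)^(q.val - N) else 0)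
    else if N ≤ p.val ∧ q.val < N then
      (if (p.val - N + 1) + (q.val + 1) = k + 1 then (-1:ℂ)^(p.val - N) else 0)
    else 0)
  else
    (if p.val < N ∧ q.val < N then
      (if (p.val + 1) + (q.val + 1) = 2*m - k + 1 then (-1:ℂ)^(p.val) else 0)
    else if N ≤ p.val ∧ N ≤ q.val then
      (if (p.val - N + 1) + (q.val - N + 1) = k + 1 then (-1:ℂ)^(p.val - N + 1) else 0)
    else 0)

/-- Gram coefficients of the symplectic bilinear form `β_C^{2m-k-1,k-1}`. -/
def cC (N m k : ℕ) (p q : Fin (2*N)) : ℂ :=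
  if k = m then
    (if N ≤ p.val ∧ q.val < N then
      (if (p.val - N + 1) + (q.val + 1) = k then (-1:ℂ)^(p.val - N) else 0)
    else if p.val < N ∧ N ≤ q.val then
      (if (p.val + 1) + (q.val - N + 1) = k then -(-1:ℂ)^(q.val - N) else 0)
    else 0)
  else
    (if p.val < N ∧ q.val < N then
      (if (p.val + 1) + (q.val + 1) = 2*m - k ∧ p.val < q.val then (-1:ℂ)^(p.val + 1)
       else if (p.val + 1) + (q.val + 1) = 2*m - k ∧ q.val < p.val then (-1:ℂ)^(p.val)
       else 0)
    else if N ≤ p.val ∧ N ≤ q.val then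
      (if (p.val - N + 1) + (q.val - N + 1) = k ∧ p.val < q.val then (-1:ℂ)^(p.val - N)
       else if (p.val - N + 1) + (q.val - N + 1) = k ∧ q.val < p.val then (-1:ℂ)^(p.val - N + 1)
       else 0)
    else 0)

/-- The bilinear pairing associated to a matrix `c` of coefficients. -/
def bFormFun (N : ℕ) (c : Fin (2*N) → Fin (2*N) → ℂ) (v w : Vsp N) : ℂ :=
  ∑ p : Fin (2*N), ∑ q : Fin (2*N), v p * (c p q * w q)

/-- The symmetric bilinear form `β_D^{2m-k,k}` (extended by zero to all of `ℂ^{2N}`). -/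
def betaD (N m k : ℕ) : Vsp N → Vsp N → ℂ := bFormFun N (cD N m k)

/-- The symplectic bilinear form `β_C^{2m-k-1,k-1}` (extended by zero to all of `ℂ^{2N}`). -/
def betaC (N m k : ℕ) : Vsp N → Vsp N → ℂ := bFormFun N (cC N m k)

/-- A subspace is isotropic with respect to a bilinear form. -/
def IsIsotropic {N : ℕ} (B : Vsp N → Vsp N → ℂ) (W : Submodule ℂ (Vsp N)) : Prop :=
  ∀ v ∈ W, ∀ w ∈ W, B v w = 0

lemma bFormFun_add_left {N : ℕ} (c : Fin (2*N) → Fin (2*N) → ℂ) (v v' w : Vsp N) :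
    bFormFun N c (v + v') w = bFormFun N c v w + bFormFun N c v' w := by
  simp [bFormFun, PiLp.add_apply, add_mul, Finset.sum_add_distrib]

lemma bFormFun_smul_left {N : ℕ} (c : Fin (2*N) → Fin (2*N) → ℂ) (s : ℂ) (v w : Vsp N) :
    bFormFun N c (s • v) w = s * bFormFun N c v w := by
  simp [bFormFun, PiLp.smul_apply, smul_eq_mul, mul_assoc, Finset.mul_sum]

lemma bFormFun_zero_left {N : ℕ} (c : Fin (2*N) → Fin (2*N) → ℂ) (w : Vsp N) :
    bFormFun N c 0 w = 0 := by
  simp [bFormFun]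

/-- `{v ∈ E | ∀ w ∈ F, B(v,w) = 0}` for the bilinear form with coefficients `c`. -/
def perpB (N : ℕ) (c : Fin (2*N) → Fin (2*N) → ℂ) (E F : Submodule ℂ (Vsp N)) :
    Submodule ℂ (Vsp N) where
  carrier := {v | v ∈ E ∧ ∀ w ∈ F, bFormFun N c v w = 0}
  add_mem' := by
    rintro x y ⟨hxE, hx⟩ ⟨hyE, hy⟩
    exact ⟨E.add_mem hxE hyE, fun w hw => by
      rw [bFormFun_add_left, hx w hw, hy w hw, add_zero]⟩
  zero_mem' := ⟨E.zero_mem, fun w hw => bFormFun_zero_left c w⟩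
  smul_mem' := by
    rintro s x ⟨hxE, hx⟩
    exact ⟨E.smul_mem s hxE, fun w hw => by
      rw [bFormFun_smul_left, hx w hw, mul_zero]⟩

/-- `F^{⊥_D}`, the orthogonal of `F` inside `E_{2m-k,k}` with respect to `β_D`. -/
def perpD (N m k : ℕ) (F : Submodule ℂ (Vsp N)) : Submodule ℂ (Vsp N) :=
  perpB N (cD N m k) (Esub N (2*m-k) k) F

/-- `F^{⊥_C}`, the orthogonal of `F` inside `E_{2m-k-1,k-1}` with respect to `β_C`. -/
def perpC (N m k : ℕ) (F : Submodule ℂ (Vsp N)) : Submodule ℂ (Vsp N) :=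
  perpB N (cC N m k) (Esub N (2*m-k-1) (k-1)) F

/-- Membership in the Cautis–Kamnitzer variety `Y`: a flag `F_0 ⊆ F_1 ⊆ … ⊆ F_{len-1}` with
`F_0 = 0`, `dim F_i = i`, and `z F_i ⊆ F_{i-1}`. -/
def InY (N len : ℕ) (F : Fin len → Submodule ℂ (Vsp N)) : Prop :=
  (∀ i : Fin len, i.val = 0 → F i = ⊥) ∧
  ∀ i j : Fin len, j.val = i.val + 1 →
    Module.finrank ℂ ↥(F j) = j.val ∧ F i ≤ F j ∧
      Submodule.map (zMap N) (F j) ≤ F i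

/-- Membership in the embedded type `D` Springer fiber `Fl^{2m-k,k}_D ⊆ Y_m`. -/
def InFlD (N m k : ℕ) (F : Fin (m+1) → Submodule ℂ (Vsp N)) : Prop :=
  InY N (m+1) F ∧ F (Fin.last m) ≤ Esub N (2*m-k) k ∧
    IsIsotropic (betaD N m k) (F (Fin.last m))

/-- Membership in the embedded type `C` Springer fiber `Fl^{2m-k-1,k-1}_C ⊆ Y_{m-1}`;
here `G : Fin m → _` is the flag `(G_0,…,G_{m-1})`. -/
def InFlC (N m k : ℕ) (G : Fin m → Submodule ℂ (Vsp N)) : Prop :=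
  InY N m G ∧ ∀ i : Fin m, i.val = m - 1 →
    G i ≤ Esub N (2*m-k-1) (k-1) ∧ IsIsotropic (betaC N m k) (G i)

/-! ### Cup diagrams -/

/-- A (dotted) cup diagram on the vertices `{1,…,m}`. -/
structure CupDiagram (m : ℕ) where
  cups : Finset (ℕ × ℕ)
  dottedCups : Finset (ℕ × ℕ)
  dottedRays : Finset ℕ
  cups_valid : ∀ p ∈ cups, 1 ≤ p.1 ∧ p.1 < p.2 ∧ p.2 ≤ m
  cups_disjoint : ∀ p ∈ cups, ∀ q ∈ cups, p ≠ q →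
    p.1 ≠ q.1 ∧ p.1 ≠ q.2 ∧ p.2 ≠ q.1 ∧ p.2 ≠ q.2
  noncrossing : ∀ p ∈ cups, ∀ l, p.1 < l → l < p.2 →
    ∃ q ∈ cups, (l = q.1 ∨ l = q.2) ∧ p.1 < q.1 ∧ q.2 < p.2
  dottedCups_sub : dottedCups ⊆ cups
  dottedRays_valid : ∀ r ∈ dottedRays, 1 ≤ r ∧ r ≤ m ∧ ∀ p ∈ cups, r ≠ p.1 ∧ r ≠ p.2
  dottedCups_cond : ∀ p ∈ dottedCups,
    (∀ q ∈ cups, ¬(q.1 < p.1 ∧ p.2 < q.2)) ∧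
    (∀ r, p.2 < r → r ≤ m → ∃ q ∈ cups, r = q.1 ∨ r = q.2)
  dottedRays_cond : ∀ r ∈ dottedRays, ∀ r', r < r' → r' ≤ m →
    ∃ q ∈ cups, r' = q.1 ∨ r' = q.2

/-- The vertex `v` carries a ray of the cup diagram `a`. -/
def CupDiagram.HasRay {m : ℕ} (a : CupDiagram m) (v : ℕ) : Prop :=
  1 ≤ v ∧ v ≤ m ∧ ∀ p ∈ a.cups, v ≠ p.1 ∧ v ≠ p.2

/-- The total number of dots of a cup diagram. -/
def CupDiagram.dots {m : ℕ} (a : CupDiagram m) : ℕ :=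
  a.dottedCups.card + a.dottedRays.card

/-! ### The sets `T_a ⊆ (ℙ¹)^m` -/

/-- The subset `T_a ⊆ (ℙ¹)^m` attached to a cup diagram `a ∈ B^{2m-k,k}`
(tuples are `0`-indexed: the coordinate `l i` corresponds to the vertex `i+1`). -/
def Ta (m k : ℕ) (a : CupDiagram m) : Set (Fin m → Submodule ℂ C2) :=
  {l | (∀ i : Fin m, Module.finrank ℂ ↥(l i) = 1) ∧
       (∀ i j : Fin m, (i.val+1, j.val+1) ∈ a.cups → (i.val+1, j.val+1) ∉ a.dottedCups →
          l j = (l i)ᗮ) ∧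
       (∀ i j : Fin m, (i.val+1, j.val+1) ∈ a.dottedCups → l i = l j) ∧
       (if k = m then
          ∀ i : Fin m, a.HasRay (i.val+1) →
            (i.val+1 ∉ a.dottedRays → l i = Submodule.span ℂ {fStd}) ∧
            (i.val+1 ∈ a.dottedRays → l i = Submodule.span ℂ {eStd})
        else
          ∀ i : Fin m, a.HasRay (i.val+1) →
            ((∃ r, a.HasRay r ∧ i.val+1 < r) → l i = Submodule.span ℂ {eStd}) ∧
            ((∀ r, a.HasRay r → r ≤ i.val+1) →
              l i = Submodule.span ℂ
                {(if (m-k) % 2 = 0 then (1:ℂ) else Complex.I) • eStd +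
                 (if i.val+1 ∈ a.dottedRays then (1:ℂ) else (-1:ℂ)) • fStd}))}

/-- The compatibility `C(F_{i} ∩ F_{i-1}^⊥) = l_i` for all `1 ≤ i ≤ m`. -/
def Compat (N m : ℕ) (F : Fin (m+1) → Submodule ℂ (Vsp N))
    (l : Fin m → Submodule ℂ C2) : Prop :=
  ∀ i : Fin m, Submodule.map (Cmap N) (F i.succ ⊓ (F i.castSucc)ᗮ) = l i

/-! ### Spheres and the topological Springer fiber -/

abbrev E3 := EuclideanSpace ℝ (Fin 3)
abbrev Sph : Type := ↥(Metric.sphere (0 : E3) 1)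

/-- The point `p = (0,0,1)`. -/
def pPt : E3 := EuclideanSpace.single 2 1
/-- The point `q = (1,0,0)`. -/
def qPt : E3 := EuclideanSpace.single 0 1

/-- The submanifold `S_a ⊆ (S²)^m` attached to a cup diagram `a`
(tuples are `0`-indexed: the coordinate `x i` corresponds to the vertex `i+1`). -/
def Sa (m : ℕ) (a : CupDiagram m) : Set (Fin m → Sph) :=
  {x | (∀ i j : Fin m, (i.val+1, j.val+1) ∈ a.cups →
          ((i.val+1, j.val+1) ∉ a.dottedCups → (x i : E3) = -(x j : E3)) ∧
          ((i.val+1, j.val+1) ∈ a.dottedCups → (x i : E3) = (x j : E3))) ∧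
       (∀ i : Fin m, a.HasRay (i.val+1) →
          (i.val+1 ∈ a.dottedRays → (x i : E3) = pPt) ∧
          (i.val+1 ∉ a.dottedRays →
            ((∀ r, a.HasRay r → r ≤ i.val+1) → (x i : E3) = -pPt) ∧
            ((∃ r, a.HasRay r ∧ i.val+1 < r) → (x i : E3) = qPt)))}

/-! ### Circle diagrams -/

/-- The edge relation of the circle diagram `\bar a b`. -/
def EdgeRel (m : ℕ) (a b : CupDiagram m) (i j : ℕ) : Prop :=
  (i, j) ∈ a.cups ∨ (j, i) ∈ a.cups ∨ (i, j) ∈ b.cups ∨ (j, i) ∈ b.cups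

/-- Two vertices lie in the same connected component of the circle diagram. -/
def Reach (m : ℕ) (a b : CupDiagram m) : ℕ → ℕ → Prop :=
  Relation.ReflTransGen (EdgeRel m a b)

/-- The number of dots on the connected component of the vertex `v` in the
circle diagram `\bar a b`. -/
def compDots (m : ℕ) (a b : CupDiagram m) (v : ℕ) : ℕ :=
  {p : ℕ × ℕ | p ∈ a.dottedCups ∧ Reach m a b v p.1 ∧ Reach m a b v p.2}.ncard +
  {p : ℕ × ℕ | p ∈ b.dottedCups ∧ Reach m a b v p.1 ∧ Reach m a b v p.2}.ncard +
  {r : ℕ | r ∈ a.dottedRays ∧ Reach m a b v r}.ncard +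
  {r : ℕ | r ∈ b.dottedRays ∧ Reach m a b v r}.ncard

/-- The connected component of `v` in the circle diagram is closed, i.e. none of
its vertices carries a ray of `a` or of `b`. -/
def IsClosedCompAt (m : ℕ) (a b : CupDiagram m) (v : ℕ) : Prop :=
  ∀ w, Reach m a b v w → ¬ a.HasRay w ∧ ¬ b.HasRay w

/-- The number of closed connected components of the circle diagram `\bar a b`. -/
def numClosed (m : ℕ) (a b : CupDiagram m) : ℕ :=
  {s : Set ℕ | ∃ v, 1 ≤ v ∧ v ≤ m ∧ IsClosedCompAt m a b v ∧
      s = {w | Reach m a b v w}}.ncard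

/-! ### The diffeomorphism `γ_{n-k,k}` -/

/-- Stereographic projection `S² \ {p} → ℂ`. -/
def sigmaProj (v : E3) : ℂ :=
  Complex.ofReal (v 0 / (1 - v 2)) + Complex.I * Complex.ofReal (v 1 / (1 - v 2))

open scoped Classical in
/-- The map `γ : S² → ℙ¹` (extended to the ambient space `ℝ³`). -/
def gammaAmb (v : E3) : Submodule ℂ C2 :=
  if v = pPt then Submodule.span ℂ {eStd}
  else Submodule.span ℂ {sigmaProj v • eStd + fStd}

/-- The coordinate swap `s(x,y,z) = (x,z,y)`. -/
def sSwap (v : E3) : E3 := WithLp.toLp 2 (fun j => v (if j.val = 1 then (2 : Fin 3) else if j.val = 2 then 1 else 0))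
/-- The coordinate swap `t(x,y,z) = (z,y,x)`. -/
def tSwap (v : E3) : E3 := WithLp.toLp 2 (fun j => v (if j.val = 0 then (2 : Fin 3) else if j.val = 2 then 0 else 1))

/-- The diffeomorphism `γ_{n-k,k} : (S²)^m → (ℙ¹)^m`. -/
def gammaNK (m k : ℕ) (x : Fin m → Sph) : Fin m → Submodule ℂ C2 := fun i =>
  if k = m then gammaAmb (x i)
  else if (m - k) % 2 = 1 then gammaAmb (tSwap (x i))
  else gammaAmb (sSwap (x i))

/-! ### Jordan types and special simultaneous Jordan systems -/

/-- The nilpotent endomorphism induced by `z` on the subquotient `W/F` has Jordan type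
`(a,b)`, encoded via the dimensions of the kernels of its powers:
`dim ker((z̄)^j) = min(j,a) + min(j,b)` for all `j`. -/
def HasJordanTypeOn (N : ℕ) (W F : Submodule ℂ (Vsp N)) (a b : ℕ) : Prop :=
  ∀ j : ℕ, Module.finrank ℂ ↥(W ⊓ Submodule.comap (zMap N ^ j) F)
    = min j a + min j b + Module.finrank ℂ ↥F

/-- A special simultaneous Jordan system at level `i` for the subspace `Fi = F_i`
(Definition of Ehrig–Stroppel–Wilbert, Definition 4.4 of the paper). -/
def SpecialSJS (N m k : ℕ) (Fi : Submodule ℂ (Vsp N)) (i : ℕ) (ev fv : ℕ → Vsp N) : Prop :=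
  (∀ j, 1 ≤ j → j + 1 ≤ m - i → zMap N (ev (j+1)) = ev j ∧ zMap N (fv (j+1)) = fv j) ∧
  (zMap N (ev 1) ∈ Fi ∧ zMap N (fv 1) ∈ Fi) ∧
  (∀ j, 1 ≤ j → j ≤ m - i → ev j ∈ perpD N m k Fi ∧ fv j ∈ perpD N m k Fi) ∧
  (∀ j, 1 ≤ j → j ≤ m - i - 1 → ev j ∈ perpC N m k Fi ∧ fv j ∈ perpC N m k Fi) ∧
  LinearIndependent ℂ (fun s : Fin (m-i) ⊕ Fin (m-i) =>
    (Submodule.Quotient.mk (Sum.elim (fun t => ev (t.val+1)) (fun t => fv (t.val+1)) s) :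
      Vsp N ⧸ Fi)) ∧
  (perpD N m k Fi
     = Fi ⊔ Submodule.span ℂ ((ev '' Set.Icc 1 (m-i)) ∪ (fv '' Set.Icc 1 (m-i)))) ∧
  (perpC N m k Fi
     = Fi ⊔ Submodule.span ℂ ((ev '' Set.Icc 1 (m-i-1)) ∪ (fv '' Set.Icc 1 (m-i-1)))) ∧
  (∀ j j', 1 ≤ j → j ≤ m-i → 1 ≤ j' → j' ≤ m-i →
      betaD N m k (fv j) (ev j') = (if j + j' = m - i + 1 then (-1:ℂ)^(j-1) else 0) ∧
      betaD N m k (ev j) (ev j') = 0 ∧ betaD N m k (fv j) (fv j') = 0) ∧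
  (∀ j j', 1 ≤ j → j ≤ m-i-1 → 1 ≤ j' → j' ≤ m-i-1 →
      betaC N m k (fv j) (ev j') = (if j + j' = m - i then (-1:ℂ)^(j-1) else 0) ∧
      betaC N m k (ev j') (fv j) = -(if j + j' = m - i then (-1:ℂ)^(j-1) else 0) ∧
      betaC N m k (ev j) (ev j') = 0 ∧ betaC N m k (fv j) (fv j') = 0) ∧
  (∀ j j', 1 ≤ j → j ≤ m-i → 1 ≤ j' → j' ≤ m-i →
      (inner ℂ (ev j) (ev j') : ℂ) = (if j = j' then 1 else 0) ∧
      (inner ℂ (fv j) (fv j') : ℂ) = (if j = j' then 1 else 0) ∧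
      (inner ℂ (ev j) (fv j') : ℂ) = 0) ∧
  (∀ j, 1 ≤ j → j ≤ m-i → ev j ∈ Fiᗮ ∧ fv j ∈ Fiᗮ) ∧
  (∀ j, 2 ≤ j → j ≤ m-i → Cmap N (ev j) = Cmap N (zMap N (ev j)) ∧
      Cmap N (fv j) = Cmap N (zMap N (fv j)))

/-! The coordinates of a point of `S_a` at the left endpoints of the cups determine all the
others: the right endpoint of a cup carries the same point or its antipode, and a ray carries
a fixed point. Conversely, every choice of points at the left endpoints extends, continuously in
the choice, to a point of `S_a`; so restricting to the left endpoints is a homeomorphism. -/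

namespace CupDiagram

variable {m : ℕ} (a : CupDiagram m)

lemma left_eq_of_mem_cups {c c' v : ℕ} (hc : (c, v) ∈ a.cups) (hc' : (c', v) ∈ a.cups) :
    c = c' := by
  by_contra hne
  exact (a.cups_disjoint _ hc _ hc' (by simp [hne])).2.2.2 rfl

lemma not_mem_cups_of_mem_cups {c v w : ℕ} (hc : (c, v) ∈ a.cups) : (v, w) ∉ a.cups := by
  intro hv
  have hlt := (a.cups_valid _ hc).2.1
  exact (a.cups_disjoint _ hv _ hc (by simp; omega)).2.1 rfl

/-- `i : Fin m` stands for the vertex `i + 1`. -/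
def leftEnds : Set (Fin m) :=
  {i : Fin m | ∃ j, (i.val + 1, j) ∈ a.cups}

lemma ncard_leftEnds : a.leftEnds.ncard = a.cups.card := by
  have himage :
      (fun i : Fin m => i.val + 1) '' a.leftEnds = Prod.fst '' (a.cups : Set (ℕ × ℕ)) := by
    ext v
    constructor
    · rintro ⟨i, ⟨j, hj⟩, rfl⟩
      exact ⟨_, hj, rfl⟩
    · rintro ⟨⟨c, j⟩, hc, rfl⟩
      have hv := a.cups_valid _ hc
      exact ⟨⟨c - 1, by simp at hv; omega⟩, ⟨j, by simpa [Nat.sub_add_cancel hv.1] using hc⟩,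
        Nat.sub_add_cancel hv.1⟩
  have hinj : Set.InjOn Prod.fst (a.cups : Set (ℕ × ℕ)) := fun c hc c' hc' h => by
    by_contra hne
    exact (a.cups_disjoint _ hc _ hc' hne).1 h
  rw [← Set.ncard_image_of_injective a.leftEnds (f := fun i : Fin m => i.val + 1)
    (fun i j h => Fin.ext (by simpa using h)), himage, hinj.ncard_image, Set.ncard_coe_finset]

lemma hasRay_of_not_mem_cups {i : Fin m} (hl : i ∉ a.leftEnds)
    (hr : ¬ ∃ l : Fin m, (l.val + 1, i.val + 1) ∈ a.cups) : a.HasRay (i.val + 1) := by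
  refine ⟨by omega, i.isLt, fun p hp => ⟨fun h => hl ⟨p.2, by rw [h]; exact hp⟩, fun h => ?_⟩⟩
  have hv := a.cups_valid _ hp
  exact hr ⟨⟨p.1 - 1, by omega⟩, by rw [Nat.sub_add_cancel hv.1, h]; exact hp⟩


/-- The point carried by the right endpoint of the cup `c` when its left endpoint carries `v`. -/
def cupImage (c : ℕ × ℕ) (v : Sph) : Sph :=
  if c ∈ a.dottedCups then v else -v

open Classical in
def rayPoint (r : ℕ) : Sph :=
  if r ∈ a.dottedRays then ⟨pPt, by simp [pPt]⟩
  else if ∃ r', a.HasRay r' ∧ r < r' then ⟨qPt, by simp [qPt]⟩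
  else ⟨-pPt, by simp [pPt]⟩

lemma continuous_cupImage (c : ℕ × ℕ) : Continuous (a.cupImage c) := by
  unfold cupImage
  split_ifs <;> fun_prop

lemma mem_Sa_iff {x : Fin m → Sph} : x ∈ Sa m a ↔
    (∀ i j : Fin m, (i.val + 1, j.val + 1) ∈ a.cups →
      x j = a.cupImage (i.val + 1, j.val + 1) (x i)) ∧
    (∀ i : Fin m, a.HasRay (i.val + 1) → x i = a.rayPoint (i.val + 1)) := by
  simp only [Sa, Set.mem_ofPred_eq, cupImage, rayPoint]
  refine and_congr (forall₂_congr fun i j => imp_congr_right fun _ => ?_)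
    (forall_congr' fun i => imp_congr_right fun _ => ?_)
  · split_ifs with hd
    · simp [hd, Subtype.ext_iff, eq_comm]
    · simp only [hd, Subtype.ext_iff, coe_neg_sphere]
      exact ⟨fun h => by simp [h], fun h => by simp [h]⟩
  · split_ifs with hd hq
    · exact ⟨fun h => Subtype.ext (h.1 hd), fun h => ⟨fun _ => congrArg Subtype.val h,
        fun hnd => absurd hd hnd⟩⟩
    · have hmax : ¬ ∀ r, a.HasRay r → r ≤ i.val + 1 := fun h =>
        let ⟨r, hr, hlt⟩ := hq; (h r hr).not_gt hlt
      exact ⟨fun h => Subtype.ext ((h.2 hd).2 hq), fun h => ⟨fun hd' => absurd hd' hd,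
        fun _ => ⟨fun hmax' => absurd hmax' hmax, fun _ => congrArg Subtype.val h⟩⟩⟩
    · have hmax : ∀ r, a.HasRay r → r ≤ i.val + 1 := fun r hr =>
        le_of_not_gt fun hlt => hq ⟨r, hr, hlt⟩
      exact ⟨fun h => Subtype.ext ((h.2 hd).1 hmax), fun h => ⟨fun hd' => absurd hd' hd,
        fun _ => ⟨fun _ => congrArg Subtype.val h, fun hq' => absurd hq' hq⟩⟩⟩

open Classical in
def extendLeftEnds (y : a.leftEnds → Sph) (j : Fin m) : Sph :=
  if h : j ∈ a.leftEnds then y ⟨j, h⟩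
  else if h' : ∃ i : Fin m, (i.val + 1, j.val + 1) ∈ a.cups then
    a.cupImage (h'.choose.val + 1, j.val + 1) (y ⟨h'.choose, _, h'.choose_spec⟩)
  else a.rayPoint (j.val + 1)

variable {a}

lemma extendLeftEnds_of_mem (y : a.leftEnds → Sph) {i : Fin m} (hi : i ∈ a.leftEnds) :
    a.extendLeftEnds y i = y ⟨i, hi⟩ :=
  dif_pos hi

lemma extendLeftEnds_of_mem_cups (y : a.leftEnds → Sph) {i j : Fin m}
    (hc : (i.val + 1, j.val + 1) ∈ a.cups) :
    a.extendLeftEnds y j = a.cupImage (i.val + 1, j.val + 1) (y ⟨i, _, hc⟩) := by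
  have h' : ∃ i : Fin m, (i.val + 1, j.val + 1) ∈ a.cups := ⟨i, hc⟩
  have hchoose : h'.choose = i :=
    Fin.ext (by simpa using a.left_eq_of_mem_cups h'.choose_spec hc)
  rw [extendLeftEnds, dif_neg (fun ⟨_, hj⟩ => a.not_mem_cups_of_mem_cups hc hj), dif_pos h']
  simp only [hchoose]

lemma extendLeftEnds_of_hasRay (y : a.leftEnds → Sph) {j : Fin m} (hj : a.HasRay (j.val + 1)) :
    a.extendLeftEnds y j = a.rayPoint (j.val + 1) := by
  rw [extendLeftEnds, dif_neg (fun ⟨_, hc⟩ => (hj.2.2 _ hc).1 rfl),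
    dif_neg (fun ⟨_, hc⟩ => (hj.2.2 _ hc).2 rfl)]

lemma continuous_extendLeftEnds : Continuous a.extendLeftEnds :=
  continuous_pi fun j => by
    unfold extendLeftEnds
    split_ifs
    · exact continuous_apply _
    · exact (a.continuous_cupImage _).comp (continuous_apply _)
    · exact continuous_const

lemma extendLeftEnds_mem_Sa (y : a.leftEnds → Sph) : a.extendLeftEnds y ∈ Sa m a :=
  a.mem_Sa_iff.2 ⟨fun _ _ hc => by
      rw [extendLeftEnds_of_mem_cups y hc, extendLeftEnds_of_mem y ⟨_, hc⟩],
    fun _ hj => extendLeftEnds_of_hasRay y hj⟩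

lemma extendLeftEnds_restrict {x : Fin m → Sph} (hx : x ∈ Sa m a) :
    a.extendLeftEnds (fun i => x i) = x := by
  obtain ⟨hcups, hrays⟩ := a.mem_Sa_iff.1 hx
  funext j
  by_cases hl : j ∈ a.leftEnds
  · exact extendLeftEnds_of_mem _ hl
  by_cases hr : ∃ i : Fin m, (i.val + 1, j.val + 1) ∈ a.cups
  · obtain ⟨i, hc⟩ := hr
    rw [extendLeftEnds_of_mem_cups _ hc, hcups i j hc]
  · rw [extendLeftEnds_of_hasRay _ (a.hasRay_of_not_mem_cups hl hr), hrays j]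
    exact a.hasRay_of_not_mem_cups hl hr

variable (a) in
def homeomorphSa : Sa m a ≃ₜ (a.leftEnds → Sph) where
  toFun x i := (x : Fin m → Sph) i
  invFun y := ⟨a.extendLeftEnds y, extendLeftEnds_mem_Sa y⟩
  left_inv x := Subtype.ext (extendLeftEnds_restrict x.2)
  right_inv y := funext fun i => extendLeftEnds_of_mem y i.2
  continuous_toFun := continuous_pi fun _ => (continuous_apply _).comp continuous_subtype_val
  continuous_invFun := continuous_extendLeftEnds.subtype_mk _

end CupDiagram

theorem statement8_general (m k : ℕ)
    (a : CupDiagram m) (ha : a.cups.card = k / 2) :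
    {i : Fin m | ∃ j, (i.val + 1, j) ∈ a.cups}.ncard = k / 2 ∧
    Nonempty (↥(Sa m a) ≃ₜ (Fin (k / 2) → Sph)) ∧
    ∃ h : ↥(Sa m a) ≃ₜ (↥{i : Fin m | ∃ j, (i.val + 1, j) ∈ a.cups} → Sph),
      ∀ (x : ↥(Sa m a)) (i : ↥{i : Fin m | ∃ j, (i.val + 1, j) ∈ a.cups}),
        h x i = (x : Fin m → Sph) (i : Fin m) := by
  have hcard : a.leftEnds.ncard = k / 2 := a.ncard_leftEnds.trans ha
  refine ⟨hcard, ⟨a.homeomorphSa.trans (Homeomorph.piCongrLeft (Y := fun _ => Sph)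
    (Finite.equivFinOfCardEq ?_))⟩, a.homeomorphSa, fun _ _ => rfl⟩
  rwa [Nat.card_coe_set_eq]

/-- `S_a` is homeomorphic to `(S²)^{⌊k/2⌋}`; explicitly, the map sending a
point of `S_a` to its tuple of coordinates indexed by the left endpoints of the cups of `a`
is a homeomorphism. -/
theorem statement8 (m k : ℕ) (hm : 1 ≤ m) (hk1 : 1 ≤ k) (hk2 : k ≤ m) (hkadm : k = m ∨ Odd k)
    (a : CupDiagram m) (ha : a.cups.card = k / 2) :
    {i : Fin m | ∃ j, (i.val + 1, j) ∈ a.cups}.ncard = k / 2 ∧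
    Nonempty (↥(Sa m a) ≃ₜ (Fin (k / 2) → Sph)) ∧
    ∃ h : ↥(Sa m a) ≃ₜ (↥{i : Fin m | ∃ j, (i.val + 1, j) ∈ a.cups} → Sph),
      ∀ (x : ↥(Sa m a)) (i : ↥{i : Fin m | ∃ j, (i.val + 1, j) ∈ a.cups}),
        h x i = (x : Fin m → Sph) (i : Fin m) :=
  statement8_general m k a ha

end Spr
end
end

section
/- Let m ≥ 2 and k = 1, let ε ∈ {0,1}, and set c = 1 if m is odd and c = √-1 if m is even. Suppose (F_1,…,F_m) ∈ Y_m satisfies C(F_i ∩ F_{i-1}^⊥) = span(e) (as subspaces of ℂ²) for all 1 ≤ i ≤ m-1 and C(F_m ∩ F_{m-1}^⊥) = span(c·e + (-1)^ε f). Then F_i = span(e_1,…,e_i) for all 1 ≤ i ≤ m-1 and F_m = span(e_1,…,e_{m-1}, c·e_m + (-1)^ε f_1). In particular F_m ⊆ E_{n-1,1} and F_m is isotropic with respect to β_D^{n-1,1}, so (F_1,…,F_m) lies in the embedded Springer fiber Fl^{n-1,1}_D. -/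
noncomputable section
namespace Spr

/-! Induction on `i`. Once `F_i = span(e_1,…,e_i)`, the condition `z F_{i+1} ⊆ F_i` kills every
coordinate of a vector of `F_{i+1}` beyond `e_{i+1}` except the one at `f_1`, so a vector of
`F_{i+1} ∩ F_i^⊥` is `a e_{i+1} + b f_1`, and `C` reads off `(a, b)`. The hypothesis on
`C(F_{i+1} ∩ F_i^⊥)` thus produces the vector `α e_{i+1} + β f_1` in `F_{i+1}`; as `α ≠ 0` it is not
in `F_i`, and `dim F_{i+1} = i + 1` gives `F_{i+1} = F_i + ℂ (α e_{i+1} + β f_1)`. Isotropy of `F_m`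
comes down to `c² (-1)^{m-1} = 1 = ((-1)^ε)²`. -/

def eSpan (N i : ℕ) : Submodule ℂ (Vsp N) := Submodule.span ℂ (eVec N '' Set.Icc 1 i)

section Coordinates

variable {N : ℕ}

lemma eVec_eq_single {j : ℕ} (h1 : 1 ≤ j) (h2 : j ≤ N) :
    eVec N j = EuclideanSpace.single (⟨j - 1, by omega⟩ : Fin (2*N)) 1 :=
  dif_pos ⟨h1, h2⟩

lemma fVec_eq_single {j : ℕ} (h1 : 1 ≤ j) (h2 : j ≤ N) :
    fVec N j = EuclideanSpace.single (⟨N + j - 1, by omega⟩ : Fin (2*N)) 1 :=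
  dif_pos ⟨h1, h2⟩

lemma eVec_apply_eq_zero {j : ℕ} {q : Fin (2*N)} (hq : q.val + 1 ≠ j) : eVec N j q = 0 := by
  unfold eVec
  split_ifs
  · rw [PiLp.single_apply, if_neg (fun h => hq (by rw [h]; dsimp; omega))]
  · rfl

lemma apply_eq_zero_of_mem_eSpan {i : ℕ} {v : Vsp N} (hv : v ∈ eSpan N i) {q : Fin (2*N)}
    (hq : i ≤ q.val) : v q = 0 := by
  have hker : eSpan N i ≤ LinearMap.ker (EuclideanSpace.proj q : Vsp N →L[ℂ] ℂ).toLinearMap := by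
    refine Submodule.span_le.2 ?_
    rintro _ ⟨j, hj, rfl⟩
    exact eVec_apply_eq_zero (by have := hj.2; omega)
  exact hker hv

lemma apply_eq_zero_of_mem_orthogonal_eSpan {i : ℕ} (hi : i ≤ N) {v : Vsp N}
    (hv : v ∈ (eSpan N i)ᗮ) {q : Fin (2*N)} (hq : q.val < i) : v q = 0 := by
  have he : eVec N (q.val + 1) ∈ eSpan N i :=
    Submodule.subset_span ⟨q.val + 1, ⟨by omega, hq⟩, rfl⟩
  have h := (Submodule.mem_orthogonal _ _).1 hv _ he
  rwa [eVec_eq_single (by omega) (by omega), EuclideanSpace.inner_single_left, map_one,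
    one_mul] at h

lemma apply_eq_zero_of_zMap_mem_eSpan {i : ℕ} {v : Vsp N} (hv : zMap N v ∈ eSpan N i)
    {q : Fin (2*N)} (hiq : i < q.val) (hqN : q.val ≠ N) : v q = 0 := by
  have h := apply_eq_zero_of_mem_eSpan hv (q := ⟨q.val - 1, by omega⟩) (by dsimp; omega)
  have hc : q.val < 2*N ∧ q.val ≠ N := ⟨q.isLt, hqN⟩
  simpa [zMap, Nat.sub_add_cancel (show 1 ≤ q.val by omega), hc] using h

lemma eq_smul_eVec_add_smul_fVec {i : ℕ} (hi : i < N) {v : Vsp N}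
    (hv : ∀ q : Fin (2*N), q.val ≠ i → q.val ≠ N → v q = 0) :
    v = v ⟨i, by omega⟩ • eVec N (i + 1) + v ⟨N, by omega⟩ • fVec N 1 := by
  rw [eVec_eq_single (by omega) (by omega), fVec_eq_single le_rfl (by omega)]
  ext q
  simp only [PiLp.add_apply, PiLp.smul_apply, PiLp.single_apply, smul_eq_mul, Fin.ext_iff]
  by_cases hqi : q.val = i
  · have hq : (⟨i, by omega⟩ : Fin (2*N)) = q := Fin.ext hqi.symm
    simp [hqi, hq, show i ≠ N by omega]
  by_cases hqN : q.val = N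
  · have hq : (⟨N, by omega⟩ : Fin (2*N)) = q := Fin.ext hqN.symm
    simp [hqN, hq, show N ≠ i by omega]
  · simp [hqi, hqN, hv q hqi hqN]

end Coordinates

section Cmap

variable {N : ℕ}

lemma Cmap_apply (v : Vsp N) (k : Fin 2) : Cmap N v k = ∑ t : Fin N, v (cIdx N k t) := rfl

lemma Cmap_eVec {j : ℕ} (h1 : 1 ≤ j) (h2 : j ≤ N) : Cmap N (eVec N j) = eStd := by
  ext k
  rw [Cmap_apply, Finset.sum_eq_single ⟨j - 1, by omega⟩]
  · fin_cases k
    · simp [eVec_eq_single h1 h2, cIdx, eStd]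
    · simp [eVec_eq_single h1 h2, cIdx, eStd, Fin.ext_iff]
      omega
  · intro t _ ht
    apply eVec_apply_eq_zero
    fin_cases k <;> simp [cIdx, Fin.ext_iff] at ht ⊢ <;> omega
  · simp

lemma Cmap_fVec {j : ℕ} (h1 : 1 ≤ j) (h2 : j ≤ N) : Cmap N (fVec N j) = fStd := by
  ext k
  rw [Cmap_apply, Finset.sum_eq_single ⟨j - 1, by omega⟩]
  · fin_cases k <;> simp [fVec_eq_single h1 h2, cIdx, fStd, Fin.ext_iff] <;> omega
  · intro t _ ht
    fin_cases k <;> simp [fVec_eq_single h1 h2, cIdx, Fin.ext_iff] at ht ⊢ <;> omega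
  · simp

lemma eq_of_smul_eStd_add_smul_fStd_eq {a b a' b' : ℂ}
    (h : a • eStd + b • fStd = a' • eStd + b' • fStd) : a = a' ∧ b = b' := by
  have h0 := congrArg (· 0) h
  have h1 := congrArg (· 1) h
  simp [eStd, fStd] at h0 h1
  exact ⟨h0, h1⟩

end Cmap

section Step

variable {N i : ℕ} {H : Submodule ℂ (Vsp N)}

lemma eq_of_mem_inf_orthogonal_eSpan (hi : i < N) (hz : H.map (zMap N) ≤ eSpan N i)
    {v : Vsp N} (hv : v ∈ H ⊓ (eSpan N i)ᗮ) {α β : ℂ} (hCv : Cmap N v = α • eStd + β • fStd) :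
    v = α • eVec N (i + 1) + β • fVec N 1 := by
  have hsupp : ∀ q : Fin (2*N), q.val ≠ i → q.val ≠ N → v q = 0 := fun q hqi hqN =>
    (lt_or_gt_of_ne hqi).elim (apply_eq_zero_of_mem_orthogonal_eSpan hi.le hv.2)
      (fun hiq => apply_eq_zero_of_zMap_mem_eSpan (hz ⟨v, hv.1, rfl⟩) hiq hqN)
  have hv_eq := eq_smul_eVec_add_smul_fVec hi hsupp
  rw [hv_eq, map_add, map_smul, map_smul, Cmap_eVec (by omega) (by omega),
    Cmap_fVec le_rfl (by omega)] at hCv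
  obtain ⟨rfl, rfl⟩ := eq_of_smul_eStd_add_smul_fStd_eq hCv
  exact hv_eq

lemma eq_eSpan_sup_of_map_Cmap_eq (hi : i < N) (hle : eSpan N i ≤ H)
    (hz : H.map (zMap N) ≤ eSpan N i)
    (hdim : Module.finrank ℂ (eSpan N i) + 1 = Module.finrank ℂ H) {α β : ℂ} (hα : α ≠ 0)
    (hC : (H ⊓ (eSpan N i)ᗮ).map (Cmap N) = Submodule.span ℂ {α • eStd + β • fStd}) :
    H = eSpan N i ⊔ Submodule.span ℂ {α • eVec N (i + 1) + β • fVec N 1} := by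
  obtain ⟨v, hv, hCv⟩ : α • eStd + β • fStd ∈ (H ⊓ (eSpan N i)ᗮ).map (Cmap N) :=
    hC ▸ Submodule.mem_span_singleton_self _
  have hv_eq := eq_of_mem_inf_orthogonal_eSpan hi hz hv hCv
  have hv_ne : v ≠ 0 := by
    rintro rfl
    have h0 : α • eStd + β • fStd = (0 : ℂ) • eStd + (0 : ℂ) • fStd := by
      rw [← hCv, map_zero, zero_smul, zero_smul, add_zero]
    exact hα (eq_of_smul_eStd_add_smul_fStd_eq h0).1
  have hv_nmem : v ∉ eSpan N i := fun h =>
    hv_ne (Submodule.disjoint_def.1 (eSpan N i).orthogonal_disjoint v h hv.2)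
  rw [← hv_eq]
  refine (Submodule.eq_of_le_of_finrank_eq
    (sup_le hle (Submodule.span_singleton_le_iff_mem _ _ |>.2 hv.1)) ?_).symm
  rw [Submodule.finrank_sup_span_singleton hv_nmem, hdim]

end Step

lemma eSpan_zero (N : ℕ) : eSpan N 0 = ⊥ := by
  simp [eSpan]

lemma eSpan_succ (N i : ℕ) : eSpan N (i + 1) = eSpan N i ⊔ Submodule.span ℂ {eVec N (i + 1)} := by
  have hIcc : Set.Icc 1 (i + 1) = Set.Icc 1 i ∪ {i + 1} := by
    ext t
    simp only [Set.mem_Icc, Set.mem_union, Set.mem_singleton_iff]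
    omega
  rw [eSpan, eSpan, hIcc, Set.image_union, Submodule.span_union, Set.image_singleton]

section Flag

variable {N m : ℕ} {F : Fin (m + 1) → Submodule ℂ (Vsp N)}

lemma InY.finrank_eq {len : ℕ} {G : Fin len → Submodule ℂ (Vsp N)} (hG : InY N len G)
    (i : Fin len) : Module.finrank ℂ (G i) = i := by
  rcases i with ⟨_ | j, hj⟩
  · simp [hG.1 ⟨0, hj⟩ rfl]
  · exact (hG.2 ⟨j, by omega⟩ ⟨j + 1, hj⟩ rfl).1

lemma InY.succ_eq_eSpan_sup (hF : InY N (m + 1) F) (hmN : m ≤ N) (i : Fin m)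
    (hFi : F i.castSucc = eSpan N i) {α β : ℂ} (hα : α ≠ 0)
    (hC : (F i.succ ⊓ (F i.castSucc)ᗮ).map (Cmap N) = Submodule.span ℂ {α • eStd + β • fStd}) :
    F i.succ = eSpan N i ⊔ Submodule.span ℂ {α • eVec N (i + 1) + β • fVec N 1} := by
  obtain ⟨hdim, hle, hz⟩ := hF.2 i.castSucc i.succ rfl
  rw [hFi] at hle hz hC
  refine eq_eSpan_sup_of_map_Cmap_eq (by omega) hle hz ?_ hα hC
  rw [← hFi, hF.finrank_eq, hdim, Fin.val_castSucc, Fin.val_succ]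

lemma InY.eq_eSpan (hF : InY N (m + 1) F) (hmN : m ≤ N)
    (hC : ∀ i : Fin m, i.val + 1 < m →
      (F i.succ ⊓ (F i.castSucc)ᗮ).map (Cmap N) = Submodule.span ℂ {eStd})
    (i : Fin (m + 1)) (hi : i.val < m) : F i = eSpan N i := by
  obtain ⟨n, hn⟩ := i
  induction n with
  | zero => rw [hF.1 _ rfl, eSpan_zero]
  | succ n ih =>
    have hCn := hC ⟨n, by omega⟩ hi
    have hstep := hF.succ_eq_eSpan_sup hmN ⟨n, by omega⟩ (ih _ (show n < m by omega))
      (β := 0) one_ne_zero (by rwa [one_smul, zero_smul, add_zero])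
    rwa [one_smul, zero_smul, add_zero, ← eSpan_succ] at hstep

end Flag

section Bilinear

variable {N : ℕ} (c : Fin (2*N) → Fin (2*N) → ℂ)

lemma bFormFun_add_right (v w w' : Vsp N) :
    bFormFun N c v (w + w') = bFormFun N c v w + bFormFun N c v w' := by
  simp [bFormFun, mul_add, Finset.sum_add_distrib]

lemma bFormFun_smul_right (s : ℂ) (v w : Vsp N) :
    bFormFun N c v (s • w) = s * bFormFun N c v w := by
  simp only [bFormFun, PiLp.smul_apply, smul_eq_mul, Finset.mul_sum]
  exact Finset.sum_congr rfl fun p _ => Finset.sum_congr rfl fun q _ => by ring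

def bForm : Vsp N →ₗ[ℂ] Vsp N →ₗ[ℂ] ℂ :=
  LinearMap.mk₂ ℂ (bFormFun N c) (bFormFun_add_left c) (bFormFun_smul_left c)
    (bFormFun_add_right c) (bFormFun_smul_right c)

lemma isIsotropic_span {S : Set (Vsp N)} (hS : ∀ x ∈ S, ∀ y ∈ S, bForm c x y = 0) :
    IsIsotropic (bFormFun N c) (Submodule.span ℂ S) := by
  have hS' : ∀ y ∈ S, Submodule.span ℂ S ≤ LinearMap.ker ((bForm c).flip y) :=
    fun y hy => Submodule.span_le.2 fun x hx => hS x hx y hy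
  intro v hv w hw
  exact Submodule.span_le (p := LinearMap.ker (bForm c v)).2 (fun y hy => hS' y hy hv) hw

lemma bForm_single_single (p q : Fin (2*N)) :
    bForm c (EuclideanSpace.single p 1) (EuclideanSpace.single q 1) = c p q := by
  simp [bForm, bFormFun, PiLp.single_apply]

end Bilinear

section GramD

variable {N m k : ℕ}

lemma bForm_cD_eVec_eVec (hk : k ≠ m) {j j' : ℕ} (hj : 1 ≤ j ∧ j ≤ N) (hj' : 1 ≤ j' ∧ j' ≤ N) :
    bForm (cD N m k) (eVec N j) (eVec N j') =
      if j + j' = 2 * m - k + 1 then (-1) ^ (j - 1) else 0 := by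
  rw [eVec_eq_single hj.1 hj.2, eVec_eq_single hj'.1 hj'.2,
    bForm_single_single, cD, if_neg hk, if_pos ⟨by dsimp; omega, by dsimp; omega⟩]
  simp only [Nat.sub_add_cancel hj.1, Nat.sub_add_cancel hj'.1]

lemma bForm_cD_eVec_fVec (hk : k ≠ m) {j j' : ℕ} (hj : 1 ≤ j ∧ j ≤ N) (hj' : 1 ≤ j' ∧ j' ≤ N) :
    bForm (cD N m k) (eVec N j) (fVec N j') = 0 := by
  rw [eVec_eq_single hj.1 hj.2, fVec_eq_single hj'.1 hj'.2,
    bForm_single_single, cD, if_neg hk, if_neg (by dsimp; omega), if_neg (by dsimp; omega)]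

lemma bForm_cD_fVec_eVec (hk : k ≠ m) {j j' : ℕ} (hj : 1 ≤ j ∧ j ≤ N) (hj' : 1 ≤ j' ∧ j' ≤ N) :
    bForm (cD N m k) (fVec N j) (eVec N j') = 0 := by
  rw [fVec_eq_single hj.1 hj.2, eVec_eq_single hj'.1 hj'.2,
    bForm_single_single, cD, if_neg hk, if_neg (by dsimp; omega), if_neg (by dsimp; omega)]

lemma bForm_cD_fVec_fVec (hk : k ≠ m) {j j' : ℕ} (hj : 1 ≤ j ∧ j ≤ N) (hj' : 1 ≤ j' ∧ j' ≤ N) :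
    bForm (cD N m k) (fVec N j) (fVec N j') = if j + j' = k + 1 then (-1) ^ j else 0 := by
  rw [fVec_eq_single hj.1 hj.2, fVec_eq_single hj'.1 hj'.2,
    bForm_single_single, cD, if_neg hk, if_neg (by dsimp; omega),
    if_pos ⟨by dsimp; omega, by dsimp; omega⟩]
  simp only [show N + j - 1 - N + 1 = j by omega, show N + j' - 1 - N + 1 = j' by omega]

end GramD

lemma isIsotropic_betaD_span {N m : ℕ} (hm : 2 ≤ m) (hmN : m < N) {a b : ℂ}
    (hab : a ^ 2 * (-1) ^ (m - 1) = b ^ 2) :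
    IsIsotropic (betaD N m 1)
      (Submodule.span ℂ (eVec N '' Set.Icc 1 (m - 1) ∪ {a • eVec N m + b • fVec N 1})) := by
  have hk : 1 ≠ m := by omega
  have hmem : 1 ≤ m ∧ m ≤ N := ⟨by omega, hmN.le⟩
  have hone : 1 ≤ 1 ∧ 1 ≤ N := ⟨le_rfl, by omega⟩
  apply isIsotropic_span
  rintro _ (⟨j, ⟨hj, hjm⟩, rfl⟩ | rfl) _ (⟨j', ⟨hj', hjm'⟩, rfl⟩ | rfl)
  · rw [bForm_cD_eVec_eVec hk ⟨hj, by omega⟩ ⟨hj', by omega⟩, if_neg (by omega)]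
  · simp only [map_add, map_smul, smul_eq_mul]
    rw [bForm_cD_eVec_eVec hk ⟨hj, by omega⟩ hmem, if_neg (by omega),
      bForm_cD_eVec_fVec hk ⟨hj, by omega⟩ hone]
    ring
  · simp only [map_add, map_smul, smul_eq_mul, LinearMap.add_apply, LinearMap.smul_apply]
    rw [bForm_cD_eVec_eVec hk hmem ⟨hj', by omega⟩, if_neg (by omega),
      bForm_cD_fVec_eVec hk hone ⟨hj', by omega⟩]
    ring
  · simp only [map_add, map_smul, smul_eq_mul, LinearMap.add_apply, LinearMap.smul_apply]
    rw [bForm_cD_eVec_eVec hk hmem hmem, if_pos (by omega),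
      bForm_cD_eVec_fVec hk hmem hone, bForm_cD_fVec_eVec hk hone hmem,
      bForm_cD_fVec_fVec hk hone hone, if_pos rfl]
    linear_combination hab

lemma span_le_Esub {N m : ℕ} (hm : 1 ≤ m) (a b : ℂ) :
    Submodule.span ℂ (eVec N '' Set.Icc 1 (m - 1) ∪ {a • eVec N m + b • fVec N 1}) ≤
      Esub N (2 * m - 1) 1 := by
  have he : ∀ j, 1 ≤ j → j ≤ m → eVec N j ∈ Esub N (2 * m - 1) 1 := fun j hj hjm =>
    Submodule.subset_span (Or.inl ⟨j, ⟨hj, by omega⟩, rfl⟩)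
  have hf : fVec N 1 ∈ Esub N (2 * m - 1) 1 :=
    Submodule.subset_span (Or.inr ⟨1, ⟨le_rfl, le_rfl⟩, rfl⟩)
  rw [Submodule.span_le]
  rintro _ (⟨j, ⟨hj, hjm⟩, rfl⟩ | rfl)
  · exact he j hj (by omega)
  · exact add_mem (Submodule.smul_mem _ a (he m hm le_rfl)) (Submodule.smul_mem _ b hf)

lemma ite_odd_sq_mul_neg_one_pow {m : ℕ} (hm : 0 < m) :
    (if Odd m then (1 : ℂ) else Complex.I) ^ 2 * (-1) ^ (m - 1) = 1 := by
  rcases Nat.even_or_odd m with hev | hodd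
  · rw [if_neg (Nat.not_odd_iff_even.2 hev), Complex.I_sq,
      (Nat.Even.sub_odd hm hev odd_one).neg_one_pow]
    ring
  · rw [if_pos hodd, (Nat.Odd.sub_odd hodd odd_one).neg_one_pow]
    ring

theorem statement13_general (m N : ℕ) (hm : 2 ≤ m) (hN : m < N) (eps : ℕ)
    (F : Fin (m+1) → Submodule ℂ (Vsp N)) (hF : InY N (m+1) F)
    (hC1 : ∀ i : Fin m, i.val + 1 < m →
      Submodule.map (Cmap N) (F i.succ ⊓ (F i.castSucc)ᗮ) = Submodule.span ℂ {eStd})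
    (hC2 : ∀ i : Fin m, i.val + 1 = m →
      Submodule.map (Cmap N) (F i.succ ⊓ (F i.castSucc)ᗮ)
        = Submodule.span ℂ
            {(if Odd m then (1:ℂ) else Complex.I) • eStd + ((-1:ℂ)^eps) • fStd}) :
    (∀ i : Fin (m+1), 1 ≤ i.val → i.val ≤ m - 1 →
        F i = Submodule.span ℂ (eVec N '' Set.Icc 1 i.val)) ∧
    F (Fin.last m) = Submodule.span ℂ
      ((eVec N '' Set.Icc 1 (m-1)) ∪
        {(if Odd m then (1:ℂ) else Complex.I) • eVec N m + ((-1:ℂ)^eps) • fVec N 1}) ∧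
    InFlD N m 1 F := by
  have hlow := hF.eq_eSpan hN.le hC1
  have hα : (if Odd m then (1:ℂ) else Complex.I) ≠ 0 := by split_ifs <;> simp
  have hlast : F (Fin.last m) = Submodule.span ℂ
      ((eVec N '' Set.Icc 1 (m-1)) ∪
        {(if Odd m then (1:ℂ) else Complex.I) • eVec N m + ((-1:ℂ)^eps) • fVec N 1}) := by
    have hi : (⟨m - 1, by omega⟩ : Fin m).succ = Fin.last m := Fin.ext (by simp; omega)
    have h := hF.succ_eq_eSpan_sup hN.le ⟨m - 1, by omega⟩ (hlow _ (by simp; omega)) hα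
      (hC2 _ (by simp; omega))
    rwa [hi, Fin.val_mk, Nat.sub_add_cancel (by omega), eSpan, ← Submodule.span_union] at h
  refine ⟨fun i _ hi => hlow i (by omega), hlast, hF, hlast ▸ span_le_Esub (by omega) _ _,
    hlast ▸ isIsotropic_betaD_span hm hN ?_⟩
  rw [ite_odd_sq_mul_neg_one_pow (by omega), ← pow_mul, (even_two.mul_left eps).neg_one_pow]

/-- Explicit description of the flags in the `(n-1,1)` Springer fiber of
type `D` corresponding to a cup diagram consisting only of rays. -/
theorem statement13 (m N : ℕ) (hm : 2 ≤ m) (hN : m < N) (eps : ℕ) (heps : eps = 0 ∨ eps = 1)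
    (F : Fin (m+1) → Submodule ℂ (Vsp N)) (hF : InY N (m+1) F)
    (hC1 : ∀ i : Fin m, i.val + 1 < m →
      Submodule.map (Cmap N) (F i.succ ⊓ (F i.castSucc)ᗮ) = Submodule.span ℂ {eStd})
    (hC2 : ∀ i : Fin m, i.val + 1 = m →
      Submodule.map (Cmap N) (F i.succ ⊓ (F i.castSucc)ᗮ)
        = Submodule.span ℂ
            {(if Odd m then (1:ℂ) else Complex.I) • eStd + ((-1:ℂ)^eps) • fStd}) :
    (∀ i : Fin (m+1), 1 ≤ i.val → i.val ≤ m - 1 →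
        F i = Submodule.span ℂ (eVec N '' Set.Icc 1 i.val)) ∧
    F (Fin.last m) = Submodule.span ℂ
      ((eVec N '' Set.Icc 1 (m-1)) ∪
        {(if Odd m then (1:ℂ) else Complex.I) • eVec N m + ((-1:ℂ)^eps) • fVec N 1}) ∧
    InFlD N m 1 F :=
  statement13_general m N hm hN eps F hF hC1 hC2

end Spr
end
end

section
/- For every (F_1,…,F_m) ∈ Y_m and every 1 ≤ i ≤ m, the image C(F_i ∩ F_{i-1}^⊥) is a one-dimensional subspace of ℂ², and the resulting map φ_m : Y_m → (ℙ¹)^m, (F_1,…,F_m) ↦ (C(F_1 ∩ F_0^⊥), C(F_2 ∩ F_1^⊥), …, C(F_m ∩ F_{m-1}^⊥)), is a bijection. -/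
noncomputable section
/-!
Write `W = F_{i-1}` and `K(W) = W^⊥ ∩ z⁻¹W` (`extSpace N W`). Every admissible `F_i` satisfies
`F_i ∩ W^⊥ ⊆ K(W)` and `F_i = W ⊕ (F_i ∩ W^⊥)`, so everything rests on `C` restricting to an
isomorphism `K(W) ≅ ℂ²`.

Injectivity only needs `zW ⊆ W`: if `v ∈ K(W)` and `Cv = 0`, write `v = x - z†x` with `x` the
blockwise partial sums of `v`. Then `Cv = 0` says that the top coordinates of `x` vanish, so
`zz†x = x` and `x - zx = -zv ∈ W`, while `x - z†x = v ⊥ W`. As `1 - z` is invertible on `W`,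
the first gives `x ∈ W` and the second `x ⊥ (1 - z)W = W`, so `x = 0`. Surjectivity is a
dimension count: `dim K(W) = dim ker z ≥ 2` as soon as `W ⊆ im z`, which holds for
`W = F_{i-1} ⊆ ker z^{i-1}` because `i ≤ m < N`.

Hence `F_i ∩ W^⊥` is the preimage in `K(W)` of the line `φ_i`, and a flag is rebuilt uniquely,
one step at a time, from any tuple of lines.
-/

open Module (finrank)

section InnerProductSpace

variable {𝕜 E : Type*} [RCLike 𝕜] [NormedAddCommGroup E] [InnerProductSpace 𝕜 E]
  [FiniteDimensional 𝕜 E]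

theorem LinearMap.eq_zero_of_sub_mem_of_sub_adjoint_mem_orthogonal {T : E →ₗ[𝕜] E}
    (hT : ∀ v, T v = v → v = 0) {W : Submodule 𝕜 E} (hW : W.map T ≤ W) {x : E}
    (hx : x - T x ∈ W) (hx' : x - T.adjoint x ∈ Wᗮ) : x = 0 := by
  have hinj : Function.Injective ⇑(1 - T : Module.End 𝕜 E) := by
    rw [← LinearMap.ker_eq_bot, Submodule.eq_bot_iff]
    exact fun v hv => hT v (sub_eq_zero.mp hv).symm
  have hWT : ∀ w ∈ W, (1 - T : Module.End 𝕜 E) w ∈ W :=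
    fun w hw => W.sub_mem hw (hW ⟨w, hw, rfl⟩)
  have hsurj : Function.Surjective ((1 - T).restrict hWT) :=
    LinearMap.injective_iff_surjective.mp fun _ _ h => Subtype.ext (hinj (congrArg Subtype.val h))
  obtain ⟨⟨w, hwW⟩, hw⟩ := hsurj ⟨x - T x, hx⟩
  have hxW : x ∈ W := hinj (congrArg Subtype.val hw) ▸ hwW
  have hxW' : x ∈ Wᗮ := by
    refine (Submodule.mem_orthogonal W x).mpr fun u hu => ?_
    obtain ⟨⟨w, hwW⟩, hw⟩ := hsurj ⟨u, hu⟩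
    obtain rfl : w - T w = u := congrArg Subtype.val hw
    rw [inner_sub_left, ← LinearMap.adjoint_inner_right, ← inner_sub_right]
    exact (Submodule.mem_orthogonal W _).mp hx' w hwW
  simpa [Submodule.inf_orthogonal_eq_bot] using Submodule.mem_inf.mpr ⟨hxW, hxW'⟩

end InnerProductSpace

section Ring

variable {R M M' : Type*} [Ring R] [AddCommGroup M] [Module R M] [AddCommGroup M'] [Module R M']

theorem Submodule.finrank_map_of_disjoint_ker {f : M →ₗ[R] M'} {p : Submodule R M}
    (hp : Disjoint p (LinearMap.ker f)) : finrank R (p.map f) = finrank R p := by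
  rw [← LinearMap.range_domRestrict]
  exact (LinearEquiv.ofInjective _ (LinearMap.injective_domRestrict_iff.mpr hp)).finrank_eq.symm

theorem Submodule.eq_of_map_eq_of_disjoint_ker {f : M →ₗ[R] M'} {p A B : Submodule R M}
    (hp : Disjoint p (LinearMap.ker f)) (hA : A ≤ p) (hB : B ≤ p) (h : A.map f = B.map f) :
    A = B := by
  have key : ∀ {A B : Submodule R M}, A ≤ p → B ≤ p → A.map f = B.map f → A ≤ B := by
    intro A B hA hB h x hx
    obtain ⟨y, hy, hxy⟩ : f x ∈ B.map f := h ▸ Submodule.mem_map_of_mem hx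
    have : y - x = 0 := (Submodule.disjoint_def.mp hp) _ (p.sub_mem (hB hy) (hA hx))
      (by rw [LinearMap.mem_ker, map_sub, hxy, sub_self])
    rwa [← sub_eq_zero.mp this]
  exact le_antisymm (key hA hB h) (key hB hA h.symm)

end Ring

theorem Submodule.finrank_comap_of_le_range {K V V' : Type*} [DivisionRing K] [AddCommGroup V]
    [Module K V] [FiniteDimensional K V] [AddCommGroup V'] [Module K V'] {f : V →ₗ[K] V'}
    {W : Submodule K V'} (hW : W ≤ LinearMap.range f) :
    finrank K (W.comap f) = finrank K W + finrank K (LinearMap.ker f) := by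
  have hker : LinearMap.ker f ≤ W.comap f := fun x hx => by simp [LinearMap.mem_ker.mp hx]
  have h := LinearMap.finrank_range_add_finrank_ker (f.domRestrict (W.comap f))
  rwa [LinearMap.range_domRestrict, Submodule.map_comap_eq_of_le hW, LinearMap.ker_domRestrict,
    (Submodule.comapSubtypeEquivOfLe hker).finrank_eq, eq_comm] at h

namespace Spr

variable {N : ℕ}

lemma zMap_apply (v : Vsp N) (p : Fin (2*N)) :
    zMap N v p = if h : p.val + 1 < 2*N ∧ p.val + 1 ≠ N then v ⟨p.val + 1, h.1⟩ else 0 := rfl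

theorem eq_zero_of_zMap_eq_self {v : Vsp N} (h : zMap N v = v) : v = 0 := by
  suffices ∀ t (p : Fin (2*N)), 2*N ≤ p.val + t → v p = 0 by
    ext p; exact this (2*N) p (by omega)
  intro t
  induction t with
  | zero => intro p hp; omega
  | succ t ih =>
    intro p hp
    rw [← h, zMap_apply]
    split_ifs with hc
    · exact ih _ (by simp only; omega)
    · rfl

def zStar (N : ℕ) : Vsp N →ₗ[ℂ] Vsp N where
  toFun v := WithLp.toLp 2 fun p =>
    if h : 1 ≤ p.val ∧ p.val ≠ N then v ⟨p.val - 1, by omega⟩ else 0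
  map_add' v w := by
    ext p
    by_cases h : 1 ≤ p.val ∧ p.val ≠ N <;> simp [h]
  map_smul' c v := by
    ext p
    by_cases h : 1 ≤ p.val ∧ p.val ≠ N <;> simp [h]

lemma zStar_apply (v : Vsp N) (p : Fin (2*N)) :
    zStar N v p = if h : 1 ≤ p.val ∧ p.val ≠ N then v ⟨p.val - 1, by omega⟩ else 0 := rfl

theorem adjoint_zMap : LinearMap.adjoint (zMap N) = zStar N := by
  let b := (EuclideanSpace.basisFun (Fin (2*N)) ℂ).toBasis
  refine ((LinearMap.eq_adjoint_iff_basis b b _ _).mpr fun p q => ?_).symm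
  simp only [b, OrthonormalBasis.coe_toBasis, EuclideanSpace.basisFun_apply,
    EuclideanSpace.inner_single_left, EuclideanSpace.inner_single_right, zStar_apply, zMap_apply,
    PiLp.single_apply, Fin.ext_iff]
  split_ifs <;> simp_all <;> omega

/-- `Esub N j j = span(e_1,…,e_j,f_1,…,f_j) = ker z^j`, described by vanishing coordinates. -/
def prefixSpace (N j : ℕ) : Submodule ℂ (Vsp N) where
  carrier := {v | ∀ p : Fin (2*N), (j ≤ p.val ∧ p.val < N) ∨ N + j ≤ p.val → v p = 0}
  add_mem' ha hb p hp := by simp [ha p hp, hb p hp]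
  zero_mem' _ _ := rfl
  smul_mem' c v hv p hp := by simp [hv p hp]

lemma prefixSpace_mono {j j' : ℕ} (h : j ≤ j') : prefixSpace N j ≤ prefixSpace N j' :=
  fun _ hv p hp => hv p (by omega)

lemma mem_prefixSpace_succ_of_zMap_mem {j : ℕ} {v : Vsp N} (h : zMap N v ∈ prefixSpace N j) :
    v ∈ prefixSpace N (j + 1) := by
  intro p hp
  have := h ⟨p.val - 1, by omega⟩ (by simp only; omega)
  rw [zMap_apply, dif_pos (by simp only; omega)] at this
  rwa [show (⟨p.val - 1 + 1, _⟩ : Fin (2*N)) = p from Fin.ext (by simp only; omega)] at this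

lemma zMap_zStar_of_mem_prefixSpace {v : Vsp N} (hv : v ∈ prefixSpace N (N - 1)) :
    zMap N (zStar N v) = v := by
  ext p
  rw [zMap_apply]
  split_ifs with h
  · rw [zStar_apply, dif_pos (by simp only; omega)]
    exact congrArg v (Fin.ext (by simp only; omega))
  · exact (hv p (by omega)).symm

lemma prefixSpace_le_range_zMap : prefixSpace N (N - 1) ≤ LinearMap.range (zMap N) :=
  fun v hv => ⟨zStar N v, zMap_zStar_of_mem_prefixSpace hv⟩

def coordFn (v : Vsp N) (k : ℕ) : ℂ := if h : k < 2*N then v ⟨k, h⟩ else 0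

lemma Cmap_apply_zero (v : Vsp N) : Cmap N v 0 = ∑ k ∈ Finset.range N, coordFn v k := by
  show ∑ i : Fin N, v (cIdx N 0 i) = _
  rw [← Fin.sum_univ_eq_sum_range (coordFn v) N]
  refine Finset.sum_congr rfl fun i _ => ?_
  rw [coordFn, dif_pos (by omega)]
  exact congrArg v (Fin.ext (by simp [cIdx]))

lemma Cmap_apply_one (v : Vsp N) : Cmap N v 1 = ∑ k ∈ Finset.Ico N (2*N), coordFn v k := by
  show ∑ i : Fin N, v (cIdx N 1 i) = _
  rw [Finset.sum_Ico_eq_sum_range, show 2*N - N = N by omega,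
    ← Fin.sum_univ_eq_sum_range (fun k => coordFn v (N + k))]
  refine Finset.sum_congr rfl fun i _ => ?_
  rw [coordFn, dif_pos (by omega)]
  exact congrArg v (Fin.ext (by simp [cIdx]))

/-- The inverse of `1 - z†`: partial sums of the coordinates within each Jordan block. -/
def blockPartialSum (v : Vsp N) : Vsp N :=
  WithLp.toLp 2 fun p => ∑ k ∈ Finset.Ico (if p.val < N then 0 else N) (p.val + 1), coordFn v k

lemma blockPartialSum_sub_zStar (v : Vsp N) :
    blockPartialSum v - zStar N (blockPartialSum v) = v := by
  ext p
  simp only [PiLp.sub_apply, zStar_apply, blockPartialSum]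
  by_cases h : 1 ≤ p.val ∧ p.val ≠ N
  · rw [dif_pos h, show p.val - 1 + 1 = p.val by omega,
      show (if p.val - 1 < N then 0 else N) = (if p.val < N then 0 else N) by split_ifs <;> omega,
      Finset.sum_Ico_succ_top (by split_ifs <;> omega), add_sub_cancel_left, coordFn,
      dif_pos p.isLt]
  · rw [dif_neg h, sub_zero, show (if p.val < N then 0 else N) = p.val by split_ifs <;> omega,
      Finset.sum_Ico_succ_top le_rfl, Finset.Ico_self, Finset.sum_empty, zero_add, coordFn,
      dif_pos p.isLt]

lemma blockPartialSum_mem_prefixSpace {v : Vsp N} (hv : Cmap N v = 0) :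
    blockPartialSum v ∈ prefixSpace N (N - 1) := by
  intro p hp
  simp only [blockPartialSum]
  rcases hp with ⟨_, hpN⟩ | hNp
  · rw [if_pos hpN, show p.val + 1 = N by omega, ← Finset.range_eq_Ico, ← Cmap_apply_zero, hv]
    rfl
  · rw [if_neg (by omega), show p.val + 1 = 2*N by omega, ← Cmap_apply_one, hv]
    rfl

theorem two_le_finrank_ker_zMap (hN : 0 < N) : 2 ≤ finrank ℂ (LinearMap.ker (zMap N)) := by
  let ι : Fin 2 → Fin (2*N) := ![⟨0, by omega⟩, ⟨N, by omega⟩]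
  have hι : Function.Injective ι := by
    intro a b h
    fin_cases a <;> fin_cases b <;> simp_all [ι, Fin.ext_iff] <;> omega
  have hli := (EuclideanSpace.basisFun (Fin (2*N)) ℂ).toBasis.linearIndependent.comp ι hι
  have hker : Submodule.span ℂ (Set.range (⇑(EuclideanSpace.basisFun (Fin (2*N)) ℂ).toBasis ∘ ι))
      ≤ LinearMap.ker (zMap N) := by
    refine Submodule.span_le.mpr ?_
    rintro _ ⟨i, rfl⟩
    ext q
    fin_cases i <;>
      simp [ι, zMap_apply, PiLp.single_apply, Fin.ext_iff]
  have := Submodule.finrank_mono hker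
  rwa [finrank_span_eq_card hli, Fintype.card_fin] at this

section Extension

def extSpace (N : ℕ) (W : Submodule ℂ (Vsp N)) : Submodule ℂ (Vsp N) :=
  Wᗮ ⊓ W.comap (zMap N)

variable {W : Submodule ℂ (Vsp N)}

theorem disjoint_extSpace_ker_Cmap (hWz : W.map (zMap N) ≤ W) :
    Disjoint (extSpace N W) (LinearMap.ker (Cmap N)) := by
  refine Submodule.disjoint_def.mpr fun v ⟨hvW, hvz⟩ hvC => ?_
  set x := blockPartialSum v
  have hv : x - zStar N x = v := blockPartialSum_sub_zStar v
  have hzx : zMap N (zStar N x) = x :=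
    zMap_zStar_of_mem_prefixSpace (blockPartialSum_mem_prefixSpace hvC)
  have hx : x = 0 := by
    refine LinearMap.eq_zero_of_sub_mem_of_sub_adjoint_mem_orthogonal
      (fun _ => eq_zero_of_zMap_eq_self) hWz ?_ (by rwa [adjoint_zMap, hv])
    rw [show x - zMap N x = -zMap N v by rw [← hv, map_sub, hzx]; abel]
    exact W.neg_mem hvz
  rw [← hv, hx, map_zero, sub_zero]

theorem map_Cmap_extSpace (hN : 0 < N) (hW : W ≤ prefixSpace N (N - 1))
    (hWz : W.map (zMap N) ≤ W) : (extSpace N W).map (Cmap N) = ⊤ := by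
  refine Submodule.eq_top_of_finrank_eq (le_antisymm (Submodule.finrank_le _) ?_)
  have hdim := Submodule.finrank_add_inf_finrank_orthogonal (K₂ := W.comap (zMap N))
    (Submodule.map_le_iff_le_comap.mp hWz)
  rw [Submodule.finrank_comap_of_le_range (hW.trans prefixSpace_le_range_zMap)] at hdim
  rw [finrank_euclideanSpace_fin,
    Submodule.finrank_map_of_disjoint_ker (disjoint_extSpace_ker_Cmap hWz)]
  have := two_le_finrank_ker_zMap hN
  unfold extSpace
  omega

def extend (N : ℕ) (W : Submodule ℂ (Vsp N)) (ℓ : Submodule ℂ C2) : Submodule ℂ (Vsp N) :=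
  W ⊔ extSpace N W ⊓ ℓ.comap (Cmap N)

variable {F : Submodule ℂ (Vsp N)} {ℓ : Submodule ℂ C2}

lemma inf_orthogonal_le_extSpace (hFW : F.map (zMap N) ≤ W) : F ⊓ Wᗮ ≤ extSpace N W :=
  fun _ hv => ⟨hv.2, hFW (Submodule.mem_map_of_mem hv.1)⟩

theorem eq_extend_map_inf_orthogonal (hWF : W ≤ F) (hFW : F.map (zMap N) ≤ W) :
    F = extend N W ((F ⊓ Wᗮ).map (Cmap N)) := by
  have hWz : W.map (zMap N) ≤ W := (Submodule.map_mono hWF).trans hFW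
  have hL := inf_orthogonal_le_extSpace hFW
  have hline : extSpace N W ⊓ ((F ⊓ Wᗮ).map (Cmap N)).comap (Cmap N) = F ⊓ Wᗮ := by
    refine Submodule.eq_of_map_eq_of_disjoint_ker (disjoint_extSpace_ker_Cmap hWz) inf_le_left hL ?_
    rw [← Submodule.map_inf_eq_map_inf_comap, inf_eq_right.mpr (Submodule.map_mono hL)]
  rw [extend, hline, inf_comm, Submodule.sup_orthogonal_inf_of_hasOrthogonalProjection hWF]

theorem finrank_map_inf_orthogonal (hWF : W ≤ F) (hFW : F.map (zMap N) ≤ W)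
    (hrank : finrank ℂ W + 1 = finrank ℂ F) : finrank ℂ ((F ⊓ Wᗮ).map (Cmap N)) = 1 := by
  have hWz : W.map (zMap N) ≤ W := (Submodule.map_mono hWF).trans hFW
  rw [Submodule.finrank_map_of_disjoint_ker
    ((disjoint_extSpace_ker_Cmap hWz).mono_left (inf_orthogonal_le_extSpace hFW)), inf_comm]
  exact Submodule.finrank_add_inf_finrank_orthogonal' hWF hrank

lemma le_extend : W ≤ extend N W ℓ := le_sup_left

lemma map_extend_le (hWz : W.map (zMap N) ≤ W) : (extend N W ℓ).map (zMap N) ≤ W := by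
  rw [extend, Submodule.map_sup]
  exact sup_le hWz (Submodule.map_le_iff_le_comap.mpr (inf_le_left.trans inf_le_right))

lemma extend_inf_orthogonal : extend N W ℓ ⊓ Wᗮ = extSpace N W ⊓ ℓ.comap (Cmap N) := by
  have hL : extSpace N W ⊓ ℓ.comap (Cmap N) ≤ Wᗮ := inf_le_left.trans inf_le_left
  rw [extend, sup_comm, sup_inf_assoc_of_le _ hL,
    Submodule.inf_orthogonal_eq_bot, sup_bot_eq]

theorem map_extend_inf_orthogonal (hN : 0 < N) (hW : W ≤ prefixSpace N (N - 1))
    (hWz : W.map (zMap N) ≤ W) : ((extend N W ℓ) ⊓ Wᗮ).map (Cmap N) = ℓ := by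
  rw [extend_inf_orthogonal, ← Submodule.map_inf_eq_map_inf_comap, map_Cmap_extSpace hN hW hWz,
    top_inf_eq]

theorem finrank_extend (hN : 0 < N) (hW : W ≤ prefixSpace N (N - 1))
    (hWz : W.map (zMap N) ≤ W) (hℓ : finrank ℂ ℓ = 1) :
    finrank ℂ (extend N W ℓ) = finrank ℂ W + 1 := by
  have hdim := Submodule.finrank_add_inf_finrank_orthogonal (le_extend : W ≤ extend N W ℓ)
  rwa [inf_comm, ← Submodule.finrank_map_of_disjoint_ker
    ((disjoint_extSpace_ker_Cmap hWz).mono_left (inf_orthogonal_le_extSpace (map_extend_le hWz))),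
    map_extend_inf_orthogonal hN hW hWz, hℓ, eq_comm] at hdim

end Extension

variable {m : ℕ} {F F' : Fin (m+1) → Submodule ℂ (Vsp N)}

theorem inY_succ_iff : InY N (m+1) F ↔ F 0 = ⊥ ∧ ∀ i : Fin m,
    finrank ℂ (F i.succ) = i + 1 ∧ F i.castSucc ≤ F i.succ ∧
      (F i.succ).map (zMap N) ≤ F i.castSucc := by
  constructor
  · rintro ⟨h0, h⟩
    exact ⟨h0 0 rfl, fun i => h i.castSucc i.succ (by simp)⟩
  · rintro ⟨h0, h⟩
    refine ⟨fun i hi => (Fin.ext hi : i = 0) ▸ h0, fun i j hij => ?_⟩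
    obtain ⟨k, rfl⟩ : ∃ k : Fin m, i = k.castSucc := ⟨⟨i, by omega⟩, rfl⟩
    obtain rfl : j = k.succ := Fin.ext (by simp [hij])
    simpa using h k

theorem InY.finrank_eq_s18 (hF : InY N (m+1) F) (i : Fin (m+1)) : finrank ℂ (F i) = i := by
  obtain ⟨h0, h⟩ := inY_succ_iff.mp hF
  induction i using Fin.cases with
  | zero => simp [h0]
  | succ i => simpa using (h i).1

/-- The map `φ_m`. -/
def phi (N m : ℕ) (F : Fin (m+1) → Submodule ℂ (Vsp N)) (i : Fin m) : Submodule ℂ C2 :=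
  (F i.succ ⊓ (F i.castSucc)ᗮ).map (Cmap N)

theorem InY.finrank_phi (hF : InY N (m+1) F) (i : Fin m) : finrank ℂ (phi N m F i) = 1 := by
  obtain ⟨hrank, hle, hz⟩ := (inY_succ_iff.mp hF).2 i
  exact finrank_map_inf_orthogonal hle hz (by rw [hF.finrank_eq_s18, hrank, Fin.val_castSucc])

theorem InY.eq_of_phi_eq (hF : InY N (m+1) F) (hF' : InY N (m+1) F')
    (h : phi N m F = phi N m F') : F = F' := by
  obtain ⟨h0, hs⟩ := inY_succ_iff.mp hF
  obtain ⟨h0', hs'⟩ := inY_succ_iff.mp hF'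
  funext i
  induction i using Fin.induction with
  | zero => rw [h0, h0']
  | succ i ih =>
    calc F i.succ = extend N (F i.castSucc) (phi N m F i) :=
          eq_extend_map_inf_orthogonal (hs i).2.1 (hs i).2.2
      _ = extend N (F' i.castSucc) (phi N m F' i) := by rw [ih, h]
      _ = F' i.succ := (eq_extend_map_inf_orthogonal (hs' i).2.1 (hs' i).2.2).symm

theorem exists_inY_phi_eq (hN : m < N) (l : Fin m → Submodule ℂ C2)
    (hl : ∀ i, finrank ℂ (l i) = 1) : ∃ F, InY N (m+1) F ∧ phi N m F = l := by
  let F : Fin (m+1) → Submodule ℂ (Vsp N) := Fin.induction ⊥ fun i W => extend N W (l i)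
  have hFs (i : Fin m) : F i.succ = extend N (F i.castSucc) (l i) := Fin.induction_succ ..
  have hpre (i : Fin m) : prefixSpace N i ≤ prefixSpace N (N - 1) := prefixSpace_mono (by omega)
  have hinv (i : Fin (m+1)) : F i ≤ prefixSpace N i ∧ (F i).map (zMap N) ≤ F i ∧
      finrank ℂ (F i) = i := by
    induction i using Fin.induction with
    | zero => exact ⟨bot_le, by simp [F], finrank_bot ..⟩
    | succ i ih =>
      obtain ⟨hWp, hWz, hWr⟩ := ih
      have hz := map_extend_le (ℓ := l i) hWz
      rw [hFs]
      refine ⟨fun v hv => mem_prefixSpace_succ_of_zMap_mem (hWp (hz (Submodule.mem_map_of_mem hv))),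
        hz.trans le_extend, ?_⟩
      rw [finrank_extend (by omega) (hWp.trans (hpre i)) hWz (hl i), hWr, Fin.val_castSucc,
        Fin.val_succ]
  refine ⟨F, inY_succ_iff.mpr ⟨rfl, fun i => ?_⟩, funext fun i => ?_⟩
  · obtain ⟨-, hWz, -⟩ := hinv i.castSucc
    exact ⟨by simpa using (hinv i.succ).2.2, hFs i ▸ le_extend, hFs i ▸ map_extend_le hWz⟩
  · obtain ⟨hWp, hWz, -⟩ := hinv i.castSucc
    rw [phi, hFs]
    exact map_extend_inf_orthogonal (by omega) (hWp.trans (hpre i)) hWz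

theorem statement18_general (m N : ℕ) (hN : m < N) :
    (∀ F : Fin (m+1) → Submodule ℂ (Vsp N), InY N (m+1) F →
      ∀ i : Fin m,
        Module.finrank ℂ ↥(Submodule.map (Cmap N) (F i.succ ⊓ (F i.castSucc)ᗮ)) = 1) ∧
    Set.BijOn
      (fun (F : Fin (m+1) → Submodule ℂ (Vsp N)) =>
        fun i : Fin m => Submodule.map (Cmap N) (F i.succ ⊓ (F i.castSucc)ᗮ))
      {F | InY N (m+1) F}
      {l : Fin m → Submodule ℂ C2 | ∀ i, Module.finrank ℂ ↥(l i) = 1} := by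
  refine ⟨fun F hF => hF.finrank_phi, fun F hF => hF.finrank_phi,
    fun F hF F' hF' h => hF.eq_of_phi_eq hF' h, fun l hl => ?_⟩
  obtain ⟨F, hF, rfl⟩ := exists_inY_phi_eq hN l hl
  exact ⟨F, hF, rfl⟩

/-- (Cautis–Kamnitzer.) For every flag in `Y_m` the subspaces
`C(F_i ∩ F_{i-1}^⊥)` are lines in `ℂ²`, and the resulting map `φ_m : Y_m → (ℙ¹)^m` is a
bijection. -/
theorem statement18 (m N : ℕ) (hm : 1 ≤ m) (hN : m < N) :
    (∀ F : Fin (m+1) → Submodule ℂ (Vsp N), InY N (m+1) F →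
      ∀ i : Fin m,
        Module.finrank ℂ ↥(Submodule.map (Cmap N) (F i.succ ⊓ (F i.castSucc)ᗮ)) = 1) ∧
    Set.BijOn
      (fun (F : Fin (m+1) → Submodule ℂ (Vsp N)) =>
        fun i : Fin m => Submodule.map (Cmap N) (F i.succ ⊓ (F i.castSucc)ᗮ))
      {F | InY N (m+1) F}
      {l : Fin m → Submodule ℂ C2 | ∀ i, Module.finrank ℂ ↥(l i) = 1} :=
  statement18_general m N hN

end Spr
end
end
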